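/- arXiv:2207.03250 — 2 statements merged into one kernel-verified Lean document; each statement's English description precedes it below -/
import Mathlib

section
/- For every positive integer $i$, $\sum_{k=1}^{\infty} \frac{h_k}{k(i+k)} = \frac{2\ln 2 \, h_i}{i} + \frac{H_i h_i}{i} - \frac{1}{i}\sum_{k=1}^{i} \frac{h_k}{k}$. -/
open Real

noncomputable def H (n k : ℕ) : ℝ := ∑ i ∈ Finset.Icc 1 k, 1 / (i : ℝ) ^ n

noncomputable def h (n k : ℕ) : ℝ := ∑ i ∈ Finset.Icc 1 k, 1 / (2 * (i : ℝ) - 1) ^ n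

noncomputable def zeta (s : ℕ) : ℝ := ∑' n : ℕ, 1 / ((n : ℝ) + 1) ^ s

/-!
Since `1 / (k (k + i)) = (1 / i) ∑_{m < i} 1 / ((k + m)(k + m + 1))`, the series splits into the
`i` series `S_m = ∑_k h_k / ((k + m)(k + m + 1))`. Summation by parts and partial fractions express
the partial sums of `S_m` through `2 h_N - H_N`, which tends to `2 log 2`, giving
`S_m = (2 log 2 + H_m) / (2m + 1)`. Finally `∑_{m < i} 1 / (2m + 1) = h_i`, and
`∑_{m < i} H_m / (2m + 1) = H_i h_i - ∑_{k ≤ i} h_k / k` by summation by parts once more.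
-/

open Filter Finset Topology

lemma H_one_succ (n : ℕ) : H 1 (n + 1) = H 1 n + 1 / ((n : ℝ) + 1) := by
  rw [H, H, sum_Icc_succ_top (by omega)]
  push_cast
  ring

lemma h_one_succ (n : ℕ) : h 1 (n + 1) = h 1 n + 1 / (2 * (n : ℝ) + 1) := by
  rw [h, h, sum_Icc_succ_top (by omega)]
  push_cast
  ring

lemma H_one_eq_sum_range (n : ℕ) : H 1 n = ∑ k ∈ range n, 1 / ((k : ℝ) + 1) := by
  induction n with
  | zero => simp [H]
  | succ n ih => rw [H_one_succ, sum_range_succ, ih]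

lemma h_one_eq_sum_range (n : ℕ) : h 1 n = ∑ k ∈ range n, 1 / (2 * (k : ℝ) + 1) := by
  induction n with
  | zero => simp [h]
  | succ n ih => rw [h_one_succ, sum_range_succ, ih]

lemma H_one_eq_harmonic (n : ℕ) : H 1 n = harmonic n := by
  simp [H, harmonic_eq_sum_Icc]

lemma h_one_nonneg (n : ℕ) : 0 ≤ h 1 n := by
  rw [h_one_eq_sum_range]
  positivity

lemma h_one_le_H_one (n : ℕ) : h 1 n ≤ H 1 n := by
  rw [h_one_eq_sum_range, H_one_eq_sum_range]
  gcongr with k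
  linarith [(k.cast_nonneg : (0 : ℝ) ≤ k)]

lemma H_one_two_mul (n : ℕ) : H 1 (2 * n) = h 1 n + H 1 n / 2 := by
  induction n with
  | zero => simp [H, h]
  | succ n ih =>
    rw [show 2 * (n + 1) = 2 * n + 1 + 1 by ring, H_one_succ, H_one_succ, ih, h_one_succ,
      H_one_succ]
    push_cast
    field_simp
    ring

/-- `2 h n - H n = 2 (H (2n) - H n)`, and `H n - log n` converges. -/
lemma tendsto_two_mul_h_one_sub_H_one :
    Tendsto (fun n : ℕ => 2 * h 1 n - H 1 n) atTop (𝓝 (2 * log 2)) := by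
  have h2n : Tendsto (fun n : ℕ => 2 * n) atTop atTop :=
    tendsto_id.const_mul_atTop' two_pos
  have hlim := ((((tendsto_harmonic_sub_log.comp h2n).sub tendsto_harmonic_sub_log).const_mul
    2).add_const (2 * log 2))
  rw [sub_self, mul_zero, zero_add] at hlim
  refine hlim.congr' ?_
  filter_upwards [eventually_ne_atTop 0] with n hn
  have hlog : log ((2 * n : ℕ) : ℝ) = log 2 + log n := by
    push_cast
    exact log_mul two_ne_zero (Nat.cast_ne_zero.mpr hn)
  simp only [Function.comp_apply]
  rw [hlog, ← H_one_eq_harmonic, ← H_one_eq_harmonic, H_one_two_mul]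
  ring

lemma tendsto_H_one_add_sub_H_one (m : ℕ) :
    Tendsto (fun n : ℕ => H 1 (n + m) - H 1 n) atTop (𝓝 0) := by
  have hsum : ∀ n, H 1 (n + m) - H 1 n = ∑ j ∈ range m, 1 / (((n + j : ℕ) : ℝ) + 1) := by
    intro n
    rw [H_one_eq_sum_range, H_one_eq_sum_range, sum_range_add, add_sub_cancel_left]
  simp_rw [hsum]
  rw [← sum_const_zero (s := range m)]
  exact tendsto_finsetSum _ fun j _ =>
    tendsto_one_div_add_atTop_nhds_zero_nat.comp (tendsto_add_atTop_nat j)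

lemma tendsto_h_one_div_add (m : ℕ) :
    Tendsto (fun n : ℕ => h 1 n / ((n : ℝ) + 1 + m)) atTop (𝓝 0) := by
  have hcesaro : Tendsto (fun n : ℕ => H 1 n / n) atTop (𝓝 0) :=
    tendsto_one_div_add_atTop_nhds_zero_nat.cesaro.congr fun n => by
      rw [H_one_eq_sum_range, inv_mul_eq_div]
  refine tendsto_of_tendsto_of_tendsto_of_le_of_le' tendsto_const_nhds hcesaro
    (Eventually.of_forall fun n => div_nonneg (h_one_nonneg n) (by positivity)) ?_
  filter_upwards [eventually_ne_atTop 0] with n hn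
  exact div_le_div₀ ((h_one_nonneg n).trans (h_one_le_H_one n)) (h_one_le_H_one n)
    (by positivity) (by linarith [(m.cast_nonneg : (0 : ℝ) ≤ m)])

/-- Summation by parts, followed by the partial fractions
`1 / ((2k - 1)(k + m)) = (2 / (2k - 1) - 1 / (k + m)) / (2m + 1)`. -/
lemma sum_range_h_one_div_mul (m n : ℕ) :
    ∑ k ∈ range n, h 1 (k + 1) / (((k : ℝ) + 1 + m) * ((k : ℝ) + 2 + m)) =
      (2 * h 1 n - (H 1 (n + m) - H 1 m)) / (2 * (m : ℝ) + 1) - h 1 n / ((n : ℝ) + 1 + m) := by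
  induction n with
  | zero => simp [h]
  | succ n ih =>
    rw [sum_range_succ, ih, show n + 1 + m = n + m + 1 by ring, H_one_succ, h_one_succ]
    push_cast
    field_simp
    ring

lemma hasSum_h_one_div_mul (m : ℕ) :
    HasSum (fun k : ℕ => h 1 (k + 1) / (((k : ℝ) + 1 + m) * ((k : ℝ) + 2 + m)))
      ((2 * log 2 + H 1 m) / (2 * (m : ℝ) + 1)) := by
  rw [hasSum_iff_tendsto_nat_of_nonneg fun k => div_nonneg (h_one_nonneg _) (by positivity)]
  simp_rw [sum_range_h_one_div_mul]
  have hlim := ((((tendsto_two_mul_h_one_sub_H_one.sub (tendsto_H_one_add_sub_H_one m)).add_const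
    (H 1 m)).div_const (2 * (m : ℝ) + 1)).sub (tendsto_h_one_div_add m))
  rw [sub_zero, sub_zero] at hlim
  exact hlim.congr fun n => by ring

lemma sum_range_one_div_mul_add (a : ℝ) (ha : 0 < a) (i : ℕ) :
    ∑ m ∈ range i, 1 / ((a + m) * (a + m + 1)) = i / (a * (a + i)) := by
  induction i with
  | zero => simp
  | succ i ih =>
    rw [sum_range_succ, ih]
    have : (0 : ℝ) ≤ i := i.cast_nonneg
    push_cast
    field_simp
    ring

lemma sum_range_H_one_div (i : ℕ) :
    ∑ m ∈ range i, H 1 m / (2 * (m : ℝ) + 1) = H 1 i * h 1 i - ∑ k ∈ Icc 1 i, h 1 k / k := by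
  induction i with
  | zero => simp [H]
  | succ n ih =>
    rw [sum_range_succ, ih, sum_Icc_succ_top (by omega), H_one_succ, h_one_succ]
    push_cast
    field_simp
    ring

lemma h_one_div_mul_add_eq_sum (i k : ℕ) (hi : i ≠ 0) :
    h 1 (k + 1) / (((k : ℝ) + 1) * ((i : ℝ) + ((k : ℝ) + 1))) =
      1 / (i : ℝ) * ∑ m ∈ range i, h 1 (k + 1) / (((k : ℝ) + 1 + m) * ((k : ℝ) + 2 + m)) := by
  have hsplit : ∑ m ∈ range i, h 1 (k + 1) / (((k : ℝ) + 1 + m) * ((k : ℝ) + 2 + m)) =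
      h 1 (k + 1) * ∑ m ∈ range i, 1 / (((k : ℝ) + 1 + m) * ((k : ℝ) + 1 + m + 1)) := by
    rw [mul_sum]
    exact sum_congr rfl fun m _ => by ring
  have hi' : (i : ℝ) ≠ 0 := Nat.cast_ne_zero.mpr hi
  rw [hsplit, sum_range_one_div_mul_add _ (by positivity)]
  field_simp
  ring

theorem stmt6 (i : ℕ) (hi : 0 < i) :
    ∑' k : ℕ, h 1 (k + 1) / (((k : ℝ) + 1) * ((i : ℝ) + ((k : ℝ) + 1))) =
      2 * Real.log 2 * h 1 i / i + H 1 i * h 1 i / i - (1 / i) * ∑ k ∈ Finset.Icc 1 i, h 1 k / k := by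
  have hsum := (hasSum_sum (s := range i) fun m _ => hasSum_h_one_div_mul m).mul_left
    (1 / (i : ℝ))
  simp_rw [← h_one_div_mul_add_eq_sum i _ hi.ne'] at hsum
  have hlimit : ∑ m ∈ range i, (2 * log 2 + H 1 m) / (2 * (m : ℝ) + 1) =
      2 * log 2 * h 1 i + ∑ m ∈ range i, H 1 m / (2 * (m : ℝ) + 1) := by
    rw [h_one_eq_sum_range, mul_sum, ← sum_add_distrib]
    exact sum_congr rfl fun m _ => by ring
  rw [hsum.tsum_eq, hlimit, sum_range_H_one_div]
  ring
end

section
/- $\sum_{k=1}^{\infty} \frac{h_k^{(2)}}{k^2} = \frac{45}{16}\zeta(4) - \sum_{k=1}^{\infty} \frac{h_k}{k^3}$. -/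
open Real

/-!
On the antidiagonal `p + q = k` the factor `k + 1` equals `p + q + 1`, so both series are double
series over `ℕ × ℕ` of `oddPairTerm a b (p, q) = 1 / ((2p+1)^a (p+q+1)^b)`. With `u = 2p+1`,
`v = 2q+1` and `s = p+q+1 = (u+v)/2`, the sum of the two summands is `(u+s) / (u^2 s^3)`, whose
symmetrization in `(p, q)` is `s (u+v)^2 / (u^2 v^2 s^3) = 4 / (u^2 v^2)`. Hence twice the sum of
the two series is `4 (∑ 1/(2p+1)^2)^2 = 4 (π^2/8)^2`, i.e. the sum is `π^4/32 = 45/16 ζ(4)`.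
-/

open Finset

theorem HasSum.sum_antidiagonal {A α : Type*} [AddCommMonoid A] [HasAntidiagonal A]
    [AddCommMonoid α] [TopologicalSpace α] [ContinuousAdd α] [RegularSpace α]
    {f : A × A → α} {a : α} (hf : HasSum f a) :
    HasSum (fun n ↦ ∑ x ∈ antidiagonal n, f x) a :=
  (HasAntidiagonal.sigmaAntidiagonalEquivProd.hasSum_iff.mpr hf).sigma fun n ↦
    (antidiagonal n).hasSum f

theorem hasSum_one_div_odd_sq :
    HasSum (fun p : ℕ ↦ 1 / (2 * (p : ℝ) + 1) ^ 2) (π ^ 2 / 8) := by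
  let f : ℕ → ℝ := fun n ↦ 1 / (n : ℝ) ^ 2
  have heven : HasSum (fun k ↦ f (2 * k)) (π ^ 2 / 24) := by
    have hf : (fun k ↦ f (2 * k)) = fun k ↦ 1 / 4 * f k := by
      ext k; simp only [f]; push_cast; ring
    rw [hf, show π ^ 2 / 24 = 1 / 4 * (π ^ 2 / 6) by ring]
    exact hasSum_zeta_two.mul_left _
  have hodd : Summable (fun k ↦ f (2 * k + 1)) :=
    hasSum_zeta_two.summable.comp_injective fun _ _ h ↦ by omega
  have hsplit := (heven.even_add_odd hodd.hasSum).unique hasSum_zeta_two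
  convert hodd.hasSum using 1
  · ext k; simp only [f]; push_cast; ring
  · linarith

theorem zeta_four_eq : zeta 4 = π ^ 4 / 90 := by
  simpa [zeta] using ((hasSum_nat_add_iff' 1).mpr hasSum_zeta_four).tsum_eq

noncomputable def oddPairTerm (a b : ℕ) (x : ℕ × ℕ) : ℝ :=
  1 / ((2 * (x.1 : ℝ) + 1) ^ a * ((x.1 : ℝ) + x.2 + 1) ^ b)

theorem oddPairTerm_nonneg (a b : ℕ) (x : ℕ × ℕ) : 0 ≤ oddPairTerm a b x := by
  unfold oddPairTerm; positivity

theorem h_succ_eq_sum_range (a k : ℕ) :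
    h a (k + 1) = ∑ p ∈ range (k + 1), 1 / (2 * (p : ℝ) + 1) ^ a := by
  rw [h, ← Ico_add_one_right_eq_Icc, sum_Ico_eq_sum_range]
  refine sum_congr (by simp) fun p _ ↦ ?_
  push_cast; ring

theorem sum_antidiagonal_oddPairTerm (a b k : ℕ) :
    ∑ x ∈ antidiagonal k, oddPairTerm a b x = h a (k + 1) / ((k : ℝ) + 1) ^ b := by
  rw [h_succ_eq_sum_range, sum_div, Nat.sum_antidiagonal_eq_sum_range_succ_mk]
  refine sum_congr rfl fun p hp ↦ ?_
  have hpk : p ≤ k := Nat.lt_succ_iff.mp (mem_range.mp hp)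
  rw [oddPairTerm, div_div, Nat.cast_sub hpk]
  ring_nf

theorem HasSum.h_div_pow {a b : ℕ} {c : ℝ} (hc : HasSum (oddPairTerm a b) c) :
    HasSum (fun k : ℕ ↦ h a (k + 1) / ((k : ℝ) + 1) ^ b) c := by
  simpa only [sum_antidiagonal_oddPairTerm] using hc.sum_antidiagonal

theorem oddPairTerm_add_swap (x : ℕ × ℕ) :
    (oddPairTerm 2 2 + oddPairTerm 1 3) x + (oddPairTerm 2 2 + oddPairTerm 1 3) x.swap =
      4 * (1 / (2 * (x.1 : ℝ) + 1) ^ 2 * (1 / (2 * (x.2 : ℝ) + 1) ^ 2)) := by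
  simp only [Pi.add_apply, oddPairTerm, Prod.fst_swap, Prod.snd_swap]
  field_simp
  ring

theorem HasSum.of_add_comp_swap {α : Type*} {f g : α × α → ℝ} {c : ℝ}
    (hf : ∀ x, 0 ≤ f x) (hfg : ∀ x, f x + f x.swap = g x) (hg : HasSum g c) :
    HasSum f (c / 2) := by
  have hfs : Summable f := hg.summable.of_nonneg_of_le hf fun x : α × α ↦ by
    linarith [hfg x, hf x.swap]
  have hswap : ∑' x : α × α, f x.swap = ∑' x, f x := (Equiv.prodComm α α).tsum_eq f
  have hc : ∑' x, f x + ∑' x : α × α, f x.swap = c :=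
    (hfs.hasSum.add hfs.prod_symm.hasSum).unique (funext hfg ▸ hg)
  convert hfs.hasSum
  linarith

theorem hasSum_oddPairTerm_two_two_add_one_three :
    HasSum (oddPairTerm 2 2 + oddPairTerm 1 3) (π ^ 4 / 32) := by
  have hodd := hasSum_one_div_odd_sq
  have hprod := hodd.mul hodd (hodd.summable.mul_of_nonneg hodd.summable
    (fun _ ↦ by positivity) fun _ ↦ by positivity)
  rw [show π ^ 4 / 32 = 4 * (π ^ 2 / 8 * (π ^ 2 / 8)) / 2 by ring]
  exact (hprod.mul_left 4).of_add_comp_swap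
    (fun x ↦ add_nonneg (oddPairTerm_nonneg 2 2 x) (oddPairTerm_nonneg 1 3 x))
    oddPairTerm_add_swap

theorem stmt18 :
    ∑' k : ℕ, h 2 (k + 1) / ((k : ℝ) + 1) ^ 2 =
      45 / 16 * zeta 4 - ∑' k : ℕ, h 1 (k + 1) / ((k : ℝ) + 1) ^ 3 := by
  have hsum := hasSum_oddPairTerm_two_two_add_one_three
  have h22 : Summable (oddPairTerm 2 2) := hsum.summable.of_nonneg_of_le (oddPairTerm_nonneg 2 2)
    fun x ↦ le_add_of_nonneg_right (oddPairTerm_nonneg 1 3 x)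
  have h13 : Summable (oddPairTerm 1 3) := hsum.summable.of_nonneg_of_le (oddPairTerm_nonneg 1 3)
    fun x ↦ le_add_of_nonneg_left (oddPairTerm_nonneg 2 2 x)
  have hvalue := (h22.hasSum.add h13.hasSum).unique hsum
  rw [h22.hasSum.h_div_pow.tsum_eq, h13.hasSum.h_div_pow.tsum_eq, zeta_four_eq]
  linarith
end
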